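/- arXiv:1501.00307 — 3 statements merged into one kernel-verified Lean document; each statement's English description precedes it below -/
import Mathlib

section
/- Let X be a real Hilbert space and T : X ⇉ X a set-valued mapping that is semilocally monotone on X (i.e., every point of dom T has a neighborhood U such that ⟨v₁ - v₂, u₁ - u₂⟩ ≥ 0 for all (u₁,v₁),(u₂,v₂) ∈ gph T with u₁, u₂ ∈ U). If dom T is convex, then T is globally monotone on X: ⟨v₁ - v₂, u₁ - u₂⟩ ≥ 0 for all (u₁,v₁),(u₂,v₂) ∈ gph T. -/
open scoped RealInnerProductSpace

/-- A semilocally monotone set-valued mapping with convex domain is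
globally monotone. -/
theorem stmt2 {X : Type*} [NormedAddCommGroup X] [InnerProductSpace ℝ X] [CompleteSpace X]
    (T : X → Set X)
    (hsemi : ∀ ub, (T ub).Nonempty → ∃ U ∈ nhds ub, ∀ u₁ v₁ u₂ v₂, u₁ ∈ U → u₂ ∈ U →
      v₁ ∈ T u₁ → v₂ ∈ T u₂ → 0 ≤ ⟪v₁ - v₂, u₁ - u₂⟫)
    (hconv : Convex ℝ {u | (T u).Nonempty}) :
    ∀ u₁ v₁ u₂ v₂, v₁ ∈ T u₁ → v₂ ∈ T u₂ → 0 ≤ ⟪v₁ - v₂, u₁ - u₂⟫ := by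
  intro u₁ v₁ u₂ v₂ hv₁ hv₂
  set d : X := u₂ - u₁ with hd
  set u : ℝ → X := fun t => (1 - t) • u₁ + t • u₂ with hu
  have hu0 : u 0 = u₁ := by simp [hu]
  have hu1 : u 1 = u₂ := by simp [hu]
  have hdom : ∀ t, 0 ≤ t → t ≤ 1 → (T (u t)).Nonempty := by
    intro t h0 h1
    exact hconv (x := u₁) (y := u₂) ⟨v₁, hv₁⟩ ⟨v₂, hv₂⟩ (by linarith) h0 (by ring)
  have hsub : ∀ s t : ℝ, u s - u t = (s - t) • d := by
    intro s t
    simp only [hu, hd]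
    module
  have hcont : Continuous u := by fun_prop
  -- Local monotonicity lemma along the segment
  have L : ∀ t₀, 0 ≤ t₀ → t₀ ≤ 1 → ∃ δ > 0, ∀ s t, |s - t₀| < δ → |t - t₀| < δ →
      ∀ w₁ ∈ T (u s), ∀ w₂ ∈ T (u t), 0 ≤ ⟪w₁ - w₂, u s - u t⟫ := by
    intro t₀ h0 h1
    obtain ⟨U, hU, hmono⟩ := hsemi (u t₀) (hdom t₀ h0 h1)
    have hpre : u ⁻¹' U ∈ nhds t₀ := hcont.continuousAt.preimage_mem_nhds hU
    obtain ⟨δ, hδ, hball⟩ := Metric.mem_nhds_iff.mp hpre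
    refine ⟨δ, hδ, fun s t hs ht w₁ hw₁ w₂ hw₂ => ?_⟩
    exact hmono (u s) w₁ (u t) w₂
      (hball (by simpa [Metric.mem_ball, Real.dist_eq] using hs))
      (hball (by simpa [Metric.mem_ball, Real.dist_eq] using ht)) hw₁ hw₂
  -- The set of parameters up to which a forward chain certificate exists
  set B : Set ℝ := {t | 0 ≤ t ∧ t ≤ 1 ∧
      ∀ s, 0 ≤ s → s ≤ t → ∃ w ∈ T (u s), 0 ≤ ⟪w - v₁, d⟫} with hB
  have hB0 : (0 : ℝ) ∈ B := by
    refine ⟨le_refl _, zero_le_one, fun s h0 h1 => ?_⟩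
    have hs0 : s = 0 := le_antisymm h1 h0
    subst hs0
    exact ⟨v₁, by rw [hu0]; exact hv₁, by simp⟩
  have hBne : B.Nonempty := ⟨0, hB0⟩
  have hbdd : BddAbove B := ⟨1, fun t ht => ht.2.1⟩
  set c : ℝ := sSup B with hc
  have hc0 : 0 ≤ c := le_csSup hbdd hB0
  have hc1 : c ≤ 1 := csSup_le hBne fun t ht => ht.2.1
  -- The supremum belongs to B
  have hcB : c ∈ B := by
    refine ⟨hc0, hc1, fun s h0 hsc => ?_⟩
    rcases lt_or_eq_of_le hsc with hlt | heq
    · obtain ⟨t, htB, hst⟩ := exists_lt_of_lt_csSup hBne hlt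
      exact htB.2.2 s h0 hst.le
    · subst heq
      obtain ⟨δ, hδ, hmono⟩ := L c hc0 hc1
      obtain ⟨t, htB, htc⟩ := exists_lt_of_lt_csSup hBne (by linarith : c - δ < c)
      have htle : t ≤ c := le_csSup hbdd htB
      obtain ⟨wt, hwt, hwt1⟩ := htB.2.2 t htB.1 le_rfl
      rcases eq_or_lt_of_le htle with heq' | hlt'
      · exact ⟨wt, heq' ▸ hwt, hwt1⟩
      · obtain ⟨wc, hwc⟩ := hdom c hc0 hc1
        have hmm := hmono c t (by simp [hδ]) (by rw [abs_sub_lt_iff]; constructor <;> linarith)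
          wc hwc wt hwt
        rw [hsub, real_inner_smul_right] at hmm
        have h1 : 0 ≤ ⟪wc - wt, d⟫ := nonneg_of_mul_nonneg_right hmm (by linarith)
        refine ⟨wc, hwc, ?_⟩
        have e1 : ⟪wc - v₁, d⟫ = ⟪wc - wt, d⟫ + ⟪wt - v₁, d⟫ := by
          simp [inner_sub_left]; try ring
        linarith [e1.ge, e1.le]
  -- The supremum is 1
  have hceq : c = 1 := by
    by_contra hne
    have hclt : c < 1 := lt_of_le_of_ne hc1 hne
    obtain ⟨δ, hδ, hmono⟩ := L c hc0 hc1
    set t' : ℝ := min 1 (c + δ / 2) with ht'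
    have ht'c : c < t' := lt_min hclt (by linarith)
    have ht'1 : t' ≤ 1 := min_le_left _ _
    have ht'B : t' ∈ B := by
      refine ⟨by linarith, ht'1, fun s h0 hst' => ?_⟩
      rcases le_or_gt s c with hsc | hcs
      · exact hcB.2.2 s h0 hsc
      · obtain ⟨wc, hwc, hwc1⟩ := hcB.2.2 c hc0 le_rfl
        obtain ⟨ws, hws⟩ := hdom s h0 (le_trans hst' ht'1)
        have hsδ : |s - c| < δ := by
          rw [abs_sub_lt_iff]
          constructor
          · have : s ≤ c + δ / 2 := le_trans hst' (min_le_right _ _)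
            linarith
          · linarith
        have hmm := hmono s c hsδ (by simp [hδ]) ws hws wc hwc
        rw [hsub, real_inner_smul_right] at hmm
        have h1 : 0 ≤ ⟪ws - wc, d⟫ := nonneg_of_mul_nonneg_right hmm (by linarith)
        refine ⟨ws, hws, ?_⟩
        have e1 : ⟪ws - v₁, d⟫ = ⟪ws - wc, d⟫ + ⟪wc - v₁, d⟫ := by
          simp [inner_sub_left]; try ring
        linarith [e1.ge, e1.le]
    have : t' ≤ c := le_csSup hbdd ht'B
    linarith
  -- Conclude using the neighborhood at u₂ = u 1
  obtain ⟨δ, hδ, hmono⟩ := L 1 zero_le_one le_rfl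
  set t : ℝ := max 0 (1 - δ / 2) with ht
  have ht0 : 0 ≤ t := le_max_left _ _
  have ht1 : t < 1 := max_lt one_pos (by linarith)
  have htδ : |t - 1| < δ := by
    rw [abs_sub_lt_iff]
    constructor
    · linarith
    · have : 1 - δ / 2 ≤ t := le_max_right _ _
      linarith
  obtain ⟨w, hw, hw1⟩ := (hceq ▸ hcB).2.2 t ht0 ht1.le
  have hmm := hmono 1 t (by simp [hδ]) htδ v₂ (by rw [hu1]; exact hv₂) w hw
  rw [hsub, real_inner_smul_right] at hmm
  have h1 : 0 ≤ ⟪v₂ - w, d⟫ := nonneg_of_mul_nonneg_right hmm (by linarith)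
  have e1 : ⟪v₁ - v₂, u₁ - u₂⟫ = ⟪v₂ - w, d⟫ + ⟪w - v₁, d⟫ := by
    simp [hd, inner_sub_left, inner_sub_right]; ring
  linarith [e1.ge, e1.le]
end

section
/- Let T : ℝ ⇉ ℝ be defined by T(x) = {-1/x} for x ≠ 0 and T(0) = ∅. Then the graph of T is closed in ℝ × ℝ, T is semilocally monotone on ℝ, dom T = ℝ \ {0} is not convex, the closure of dom T is ℝ (which is convex), and T is not monotone on ℝ. -/
lemma mem_T_iff (T : ℝ → Set ℝ)
    (hT : ∀ x, T x = if x ≠ 0 then {-1 / x} else ∅) (x v : ℝ) :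
    v ∈ T x ↔ x ≠ 0 ∧ v = -1 / x := by
  rw [hT]
  by_cases hx : x = 0 <;> simp [hx]

lemma dom_eq (T : ℝ → Set ℝ)
    (hT : ∀ x, T x = if x ≠ 0 then {-1 / x} else ∅) :
    {u | (T u).Nonempty} = {x : ℝ | x ≠ 0} := by
  ext x
  simp only [Set.mem_setOf_eq, Set.Nonempty]
  constructor
  · rintro ⟨v, hv⟩
    exact ((mem_T_iff T hT x v).1 hv).1
  · intro hx
    exact ⟨-1 / x, (mem_T_iff T hT x _).2 ⟨hx, rfl⟩⟩

/-- For `T x = {-1/x}` (`x ≠ 0`), `T 0 = ∅`: the graph is closed, `T` is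
semilocally monotone on `ℝ`, `dom T = ℝ \ {0}` is not convex, the closure of `dom T`
is `ℝ` (convex), and `T` is not monotone. -/
theorem stmt3 (T : ℝ → Set ℝ)
    (hT : ∀ x, T x = if x ≠ 0 then {-1 / x} else ∅) :
    IsClosed {p : ℝ × ℝ | p.2 ∈ T p.1} ∧
    (∀ ub, (T ub).Nonempty → ∃ U ∈ nhds ub, ∀ u₁ v₁ u₂ v₂, u₁ ∈ U → u₂ ∈ U →
      v₁ ∈ T u₁ → v₂ ∈ T u₂ → 0 ≤ (v₁ - v₂) * (u₁ - u₂)) ∧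
    {u | (T u).Nonempty} = {x : ℝ | x ≠ 0} ∧
    ¬ Convex ℝ {u | (T u).Nonempty} ∧
    closure {u | (T u).Nonempty} = Set.univ ∧
    Convex ℝ (closure {u | (T u).Nonempty}) ∧
    ¬ (∀ u₁ v₁ u₂ v₂, v₁ ∈ T u₁ → v₂ ∈ T u₂ → 0 ≤ (v₁ - v₂) * (u₁ - u₂)) := by
  have hdom := dom_eq T hT
  refine ⟨?_, ?_, hdom, ?_, ?_, ?_, ?_⟩
  · -- closed graph
    have hset : {p : ℝ × ℝ | p.2 ∈ T p.1} = {p : ℝ × ℝ | p.1 * p.2 = -1} := by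
      ext ⟨x, v⟩
      simp only [Set.mem_setOf_eq, mem_T_iff T hT]
      constructor
      · rintro ⟨hx, rfl⟩
        field_simp
      · intro h
        have hx : x ≠ 0 := by rintro rfl; simp at h
        exact ⟨hx, by field_simp; linarith⟩
    rw [hset]
    exact isClosed_eq (by continuity) continuous_const
  · -- semilocal monotonicity
    intro ub hub
    obtain ⟨v, hv⟩ := hub
    have hub0 : ub ≠ 0 := ((mem_T_iff T hT ub v).1 hv).1
    refine ⟨{x | x * ub > 0}, ?_, ?_⟩
    · have : IsOpen {x : ℝ | x * ub > 0} := isOpen_lt continuous_const (by continuity)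
      exact this.mem_nhds (by simp [Set.mem_setOf_eq, mul_self_pos.2 hub0])
    · intro u₁ v₁ u₂ v₂ h1 h2 hv1 hv2
      obtain ⟨hu1, rfl⟩ := (mem_T_iff T hT _ _).1 hv1
      obtain ⟨hu2, rfl⟩ := (mem_T_iff T hT _ _).1 hv2
      have hprod : 0 < u₁ * u₂ := by
        have h1' : 0 < u₁ * ub := h1
        have h2' : 0 < u₂ * ub := h2
        nlinarith [mul_self_nonneg ub]
      have : (-1 / u₁ - -1 / u₂) * (u₁ - u₂) = (u₁ - u₂) ^ 2 / (u₁ * u₂) := by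
        field_simp
        ring
      rw [this]
      positivity
  · -- not convex
    rw [hdom]
    intro hconv
    have h1 : (-1 : ℝ) ∈ {x : ℝ | x ≠ 0} := by norm_num
    have h2 : (1 : ℝ) ∈ {x : ℝ | x ≠ 0} := by norm_num
    have := hconv h1 h2 (by norm_num : (0:ℝ) ≤ 1/2) (by norm_num : (0:ℝ) ≤ 1/2) (by norm_num)
    norm_num at this
  · -- closure is univ
    rw [hdom]
    have : ({x : ℝ | x ≠ 0}) = ({(0:ℝ)}ᶜ) := by ext x; simp
    rw [this]
    exact dense_compl_singleton (0:ℝ) |>.closure_eq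
  · -- closure convex
    rw [hdom]
    have : ({x : ℝ | x ≠ 0}) = ({(0:ℝ)}ᶜ) := by ext x; simp
    rw [this, (dense_compl_singleton (0:ℝ)).closure_eq]
    exact convex_univ
  · -- not monotone
    intro h
    have hv1 : (1:ℝ) ∈ T (-1) := (mem_T_iff T hT _ _).2 ⟨by norm_num, by norm_num⟩
    have hv2 : (-1:ℝ) ∈ T 1 := (mem_T_iff T hT _ _).2 ⟨by norm_num, by norm_num⟩
    have := h (-1) 1 1 (-1) hv1 hv2
    norm_num at this
end

section
/- Let X be a real Hilbert space and g : X → ℝ differentiable such that its gradient ∇g is semilocally monotone on X: every point x̄ ∈ X has a neighborhood U with ⟨∇g(x) - ∇g(y), x - y⟩ ≥ 0 for all x, y ∈ U. Then ∇g is globally monotone on X. -/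
open scoped RealInnerProductSpace

/-- A locally nondecreasing function on `ℝ` is monotone. -/
lemma locMono {f : ℝ → ℝ}
    (h : ∀ t : ℝ, ∃ ε > (0 : ℝ), ∀ s₁ s₂ : ℝ,
      |s₁ - t| < ε → |s₂ - t| < ε → s₁ ≤ s₂ → f s₁ ≤ f s₂) :
    Monotone f := by
  intro a b hab
  set S : Set ℝ := {t | t ∈ Set.Icc a b ∧ f a ≤ f t} with hS
  have haS : a ∈ S := ⟨⟨le_refl a, hab⟩, le_refl _⟩
  have hne : S.Nonempty := ⟨a, haS⟩
  have hbdd : BddAbove S := ⟨b, fun t ht => ht.1.2⟩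
  set c := sSup S with hc
  have hac : a ≤ c := le_csSup hbdd haS
  have hcb : c ≤ b := csSup_le hne fun t ht => ht.1.2
  obtain ⟨ε, hε, hmono⟩ := h c
  -- c ∈ S
  have hcS : c ∈ S := by
    obtain ⟨s, hsS, hs⟩ := exists_lt_of_lt_csSup hne (by linarith : c - ε < c)
    have hsc : s ≤ c := le_csSup hbdd hsS
    have h1 : f s ≤ f c := hmono s c (by rw [abs_lt]; constructor <;> linarith)
      (by simp [hε]) hsc
    exact ⟨⟨hac, hcb⟩, le_trans hsS.2 h1⟩
  -- c = b
  rcases eq_or_lt_of_le hcb with hcb' | hcb'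
  · rw [← hcb']; exact hcS.2
  · exfalso
    set t := min b (c + ε / 2) with ht
    have hct : c < t := lt_min hcb' (by linarith)
    have htc : |t - c| < ε := by
      rw [abs_lt]
      constructor
      · linarith
      · have : t ≤ c + ε / 2 := min_le_right _ _
        linarith
    have htS : t ∈ S := ⟨⟨le_trans hac hct.le, min_le_left _ _⟩,
      le_trans hcS.2 (hmono c t (by simp [hε]) htc hct.le)⟩
    exact absurd (le_csSup hbdd htS) (not_le.mpr hct)

/-- If `g` is differentiable on a real Hilbert space and its gradient is
semilocally monotone, then the gradient is globally monotone. -/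
theorem stmt13 {X : Type*} [NormedAddCommGroup X] [InnerProductSpace ℝ X] [CompleteSpace X]
    (g : X → ℝ) (hg : Differentiable ℝ g)
    (hsemi : ∀ xb : X, ∃ U ∈ nhds xb, ∀ x ∈ U, ∀ y ∈ U,
      0 ≤ ⟪gradient g x - gradient g y, x - y⟫) :
    ∀ x y : X, 0 ≤ ⟪gradient g x - gradient g y, x - y⟫ := by
  intro x y
  set v := x - y with hv
  set γ : ℝ → X := fun t => y + t • v with hγ
  set f : ℝ → ℝ := fun t => ⟪gradient g (γ t), v⟫ with hf
  have hloc : ∀ t : ℝ, ∃ ε > (0 : ℝ), ∀ s₁ s₂ : ℝ,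
      |s₁ - t| < ε → |s₂ - t| < ε → s₁ ≤ s₂ → f s₁ ≤ f s₂ := by
    intro t
    obtain ⟨U, hU, hmonoU⟩ := hsemi (γ t)
    have hcont : Continuous γ := by continuity
    have : γ ⁻¹' U ∈ nhds t := hcont.continuousAt.preimage_mem_nhds (by simpa using hU)
    obtain ⟨ε, hε, hball⟩ := Metric.mem_nhds_iff.mp this
    refine ⟨ε, hε, fun s₁ s₂ h1 h2 hle => ?_⟩
    have hm1 : γ s₁ ∈ U := hball (by simpa [Real.dist_eq] using h1)
    have hm2 : γ s₂ ∈ U := hball (by simpa [Real.dist_eq] using h2)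
    have key := hmonoU (γ s₂) hm2 (γ s₁) hm1
    have hdiff : γ s₂ - γ s₁ = (s₂ - s₁) • v := by
      simp [hγ, sub_smul]
    rw [hdiff, real_inner_smul_right] at key
    have hfs : f s₂ - f s₁ = ⟪gradient g (γ s₂) - gradient g (γ s₁), v⟫ := by
      simp [hf, inner_sub_left]
    rcases eq_or_lt_of_le hle with h | h
    · rw [h]
    · nlinarith [key, hfs]
  have := locMono hloc (by norm_num : (0:ℝ) ≤ 1)
  have h0 : γ 0 = y := by simp [hγ]
  have h1 : γ 1 = x := by simp [hγ, hv]
  have : ⟪gradient g y, v⟫ ≤ ⟪gradient g x, v⟫ := by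
    simpa [hf, h0, h1] using this
  have := sub_nonneg.mpr this
  rw [← inner_sub_left] at this
  exact this
end
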